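/- arXiv:2504.02784 — 4 statements merged into one kernel-verified Lean document; each statement's English description precedes it below -/
import Mathlib

section
/- Let x ≤ y ≤ z be real numbers and let (a_n) be complex numbers defined for integers n with x ≤ n < z. Then |∑_{x ≤ n < y} a_n| ≤ ∫₀¹ min(y − x + 1, ‖ξ‖^{−1}) · |∑_{x ≤ n < z} a_n e(nξ)| dξ, where e(t) = exp(2πit) and ‖ξ‖ is the distance from ξ to the nearest integer. -/
open scoped Real

/-- Distance from `ξ` to the nearest integer. -/
noncomputable def distInt (x : ℝ) : ℝ := |x - round x|

/-- `e(t) = exp(2πit)`. -/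
noncomputable def e (t : ℝ) : ℂ := Complex.exp (2 * Real.pi * Complex.I * t)

/-!
Orthogonality of the characters `ξ ↦ e(nξ)` on `[0, 1]` writes the partial sum
`∑_{x ≤ n < y} aₙ` as `∫₀¹ F(ξ) · conj D(ξ) dξ`, where `F(ξ) = ∑_{x ≤ n < z} aₙ e(nξ)` and
`D(ξ) = ∑_{x ≤ m < y} e(mξ)`. The Dirichlet kernel `D` is bounded by its number of terms, at most
`y - x + 1`, and, being a geometric sum of ratio `e(ξ)` with `|e(ξ) - 1| = 2 |sin πξ| ≥ 4 ‖ξ‖`,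
also by `1 / (2 ‖ξ‖)`.
-/

open Finset ComplexConjugate MeasureTheory

section Character

lemma e_eq_exp_mul_I (t : ℝ) : e t = Complex.exp (↑(2 * π * t) * Complex.I) := by
  rw [e]; push_cast; ring_nf

@[fun_prop]
lemma continuous_e : Continuous e := by
  unfold e; fun_prop

lemma norm_e (t : ℝ) : ‖e t‖ = 1 := by
  rw [e_eq_exp_mul_I, Complex.norm_exp_ofReal_mul_I]

lemma e_add (s t : ℝ) : e (s + t) = e s * e t := by
  simp only [e, ← Complex.exp_add]; push_cast; ring_nf

lemma conj_e (t : ℝ) : conj (e t) = e (-t) := by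
  rw [e_eq_exp_mul_I, e_eq_exp_mul_I, ← Complex.exp_conj]
  simp only [map_mul, Complex.conj_ofReal, Complex.conj_I]
  push_cast; ring_nf

lemma e_intCast_mul (m : ℤ) (t : ℝ) : e (m * t) = e t ^ m := by
  rw [e, e, ← Complex.exp_int_mul]; push_cast; ring_nf

lemma e_intCast (m : ℤ) : e m = 1 := by
  rw [e, ← Complex.exp_int_mul_two_pi_mul_I m]; push_cast; ring_nf

lemma norm_e_sub_one (t : ℝ) : ‖e t - 1‖ = 2 * |Real.sin (π * t)| := by
  rw [e_eq_exp_mul_I, mul_comm _ Complex.I, Complex.norm_exp_I_mul_ofReal_sub_one, norm_mul,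
    Real.norm_ofNat, Real.norm_eq_abs]
  ring_nf

/-- Jordan's inequality `|sin πt| ≥ 2|t|`, applied to `t = ξ - round ξ`. -/
lemma four_mul_distInt_le_norm_e_sub_one (ξ : ℝ) : 4 * distInt ξ ≤ ‖e ξ - 1‖ := by
  set t := ξ - round ξ
  have ht : |t| ≤ 1 / 2 := abs_sub_round ξ
  have hξ : e ξ = e t := by
    rw [show ξ = t + (round ξ : ℤ) by ring, e_add, e_intCast, mul_one]
  have hjordan := Real.mul_abs_le_abs_sin (x := π * t)
    (by rw [abs_mul, abs_of_pos Real.pi_pos]; nlinarith [Real.pi_pos])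
  rw [abs_mul, abs_of_pos Real.pi_pos, ← mul_assoc, div_mul_cancel₀ _ Real.pi_ne_zero] at hjordan
  rw [hξ, norm_e_sub_one, distInt]
  linarith

lemma integral_e_intCast_mul (k : ℤ) :
    ∫ ξ in (0 : ℝ)..1, e (k * ξ) = if k = 0 then 1 else 0 := by
  split_ifs with hk
  · simp [hk, e]
  · have hc : 2 * π * Complex.I * k ≠ 0 := by simp [Real.pi_ne_zero, hk]
    simp only [e, Complex.ofReal_mul, Complex.ofReal_intCast, ← mul_assoc]
    rw [integral_exp_mul_complex hc, Complex.ofReal_one, Complex.ofReal_zero, mul_zero,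
      Complex.exp_zero, mul_one, show 2 * π * Complex.I * k = k * (2 * π * Complex.I) by ring,
      Complex.exp_int_mul_two_pi_mul_I, sub_self, zero_div]

end Character

section Orthogonality

lemma integral_sum_mul_e_neg (T : Finset ℤ) (a : ℤ → ℂ) (m : ℤ) :
    ∫ ξ in (0 : ℝ)..1, (∑ n ∈ T, a n * e (n * ξ)) * e (-(m * ξ)) =
      if m ∈ T then a m else 0 := by
  have hterm (n : ℤ) (ξ : ℝ) : a n * e (n * ξ) * e (-(m * ξ)) = a n * e ((n - m : ℤ) * ξ) := by
    rw [mul_assoc, ← e_add]; push_cast; ring_nf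
  simp_rw [sum_mul, hterm]
  rw [intervalIntegral.integral_finsetSum fun _ _ ↦ Continuous.intervalIntegrable (by fun_prop) _ _]
  simp_rw [intervalIntegral.integral_const_mul, integral_e_intCast_mul, sub_eq_zero,
    mul_ite, mul_one, mul_zero, sum_ite_eq']

lemma sum_eq_integral_mul_conj {S T : Finset ℤ} (hST : S ⊆ T) (a : ℤ → ℂ) :
    ∑ n ∈ S, a n =
      ∫ ξ in (0 : ℝ)..1, (∑ n ∈ T, a n * e (n * ξ)) * conj (∑ m ∈ S, e (m * ξ)) := by
  simp_rw [map_sum, conj_e, mul_sum]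
  rw [intervalIntegral.integral_finsetSum fun _ _ ↦ Continuous.intervalIntegrable (by fun_prop) _ _]
  exact sum_congr rfl fun m hm ↦ by rw [integral_sum_mul_e_neg, if_pos (hST hm)]

end Orthogonality

section DirichletKernel

lemma sub_one_mul_sum_Icc_zpow {K : Type*} [DivisionRing K] {w : K} (hw : w ≠ 0) (M : ℤ) :
    ∀ N, M - 1 ≤ N → (w - 1) * ∑ m ∈ Icc M N, w ^ m = w ^ (N + 1) - w ^ M := by
  refine Int.leInduction (by simp) fun N hN ih ↦ ?_
  rw [← insert_Icc_right_eq_Icc_add_one (by omega), sum_insert (by simp), mul_add, ih,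
    zpow_add_one₀ hw (N + 1), sub_one_mul, (Commute.self_zpow₀ w (N + 1)).eq]
  abel

lemma norm_sub_one_mul_norm_sum_Icc_zpow_le {w : ℂ} (hw : ‖w‖ = 1) (M N : ℤ) :
    ‖w - 1‖ * ‖∑ m ∈ Icc M N, w ^ m‖ ≤ 2 := by
  rcases lt_or_ge N (M - 1) with hNM | hMN
  · simp [Icc_eq_empty_of_lt (show N < M by omega)]
  rw [← norm_mul, sub_one_mul_sum_Icc_zpow (norm_ne_zero_iff.mp (by simp [hw])) M N hMN]
  calc ‖w ^ (N + 1) - w ^ M‖ ≤ ‖w ^ (N + 1)‖ + ‖w ^ M‖ := norm_sub_le _ _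
    _ = 2 := by rw [norm_zpow, norm_zpow, hw]; norm_num

lemma distInt_mul_norm_sum_Icc_e_le (ξ : ℝ) (M N : ℤ) :
    distInt ξ * ‖∑ m ∈ Icc M N, e (m * ξ)‖ ≤ 1 / 2 := by
  have hkernel := norm_sub_one_mul_norm_sum_Icc_zpow_le (norm_e ξ) M N
  simp_rw [← e_intCast_mul] at hkernel
  nlinarith [four_mul_distInt_le_norm_e_sub_one ξ, norm_nonneg (∑ m ∈ Icc M N, e (m * ξ))]

lemma norm_sum_e_le_card (S : Finset ℤ) (ξ : ℝ) : ‖∑ m ∈ S, e (m * ξ)‖ ≤ #S :=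
  (norm_sum_le _ _).trans_eq (by simp [norm_e])

lemma card_Icc_ceil_sub_one_le {x y : ℝ} (hxy : x ≤ y) :
    (#(Icc ⌈x⌉ (⌈y⌉ - 1)) : ℝ) ≤ y - x + 1 := by
  rw [Int.card_Icc, sub_add_cancel]
  rcases le_total (⌈y⌉ - ⌈x⌉) 0 with h | h
  · rw [Int.toNat_of_nonpos h, Nat.cast_zero]; linarith
  · have : (((⌈y⌉ - ⌈x⌉).toNat : ℤ) : ℝ) = ⌈y⌉ - ⌈x⌉ := by
      rw [Int.toNat_of_nonneg h]; push_cast; ring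
    rw [← Int.cast_natCast, this]
    linarith [Int.le_ceil x, Int.ceil_lt_add_one y]

lemma norm_sum_Icc_ceil_e_le_min {x y : ℝ} (hxy : x ≤ y) {ξ : ℝ} (hξ : 0 < distInt ξ) :
    ‖∑ m ∈ Icc ⌈x⌉ (⌈y⌉ - 1), e (m * ξ)‖ ≤ min (y - x + 1) (distInt ξ)⁻¹ := by
  refine le_min ((norm_sum_e_le_card _ ξ).trans (card_Icc_ceil_sub_one_le hxy)) ?_
  rw [← one_div, le_div_iff₀' hξ]
  linarith [distInt_mul_norm_sum_Icc_e_le ξ ⌈x⌉ (⌈y⌉ - 1)]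

end DirichletKernel

section Integrability

lemma continuous_distInt : Continuous distInt :=
  (continuous_norm.comp (AddCircle.continuous_mk' 1)).congr fun _ ↦ UnitAddCircle.norm_eq

lemma distInt_pos_of_notMem_range_intCast {ξ : ℝ} (hξ : ξ ∉ Set.range ((↑) : ℤ → ℝ)) :
    0 < distInt ξ :=
  abs_pos.mpr (sub_ne_zero.mpr fun h ↦ hξ ⟨_, h.symm⟩)

lemma intervalIntegrable_min_inv_distInt_mul {c : ℝ} (hc : 0 ≤ c) {f : ℝ → ℝ} (hf : Continuous f)
    (a b : ℝ) : IntervalIntegrable (fun ξ ↦ min c (distInt ξ)⁻¹ * f ξ) volume a b := by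
  have hmeas : Measurable fun ξ ↦ min c (distInt ξ)⁻¹ * f ξ :=
    (measurable_const.min continuous_distInt.measurable.inv).mul hf.measurable
  refine (Continuous.intervalIntegrable (by fun_prop) a b).mono_fun' (g := fun ξ ↦ c * ‖f ξ‖)
    hmeas.aestronglyMeasurable (ae_of_all _ fun ξ ↦ ?_)
  have hmin : 0 ≤ min c (distInt ξ)⁻¹ := le_min hc (inv_nonneg.mpr (abs_nonneg _))
  dsimp only
  rw [norm_mul, Real.norm_of_nonneg hmin]
  exact mul_le_mul_of_nonneg_right (min_le_left _ _) (norm_nonneg _)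

end Integrability

theorem stmt7 (x y z : ℝ) (hxy : x ≤ y) (hyz : y ≤ z) (a : ℤ → ℂ) :
    ‖∑ n ∈ Finset.Icc ⌈x⌉ (⌈y⌉ - 1), a n‖ ≤
      ∫ ξ in (0 : ℝ)..1, min (y - x + 1) (distInt ξ)⁻¹ *
        ‖∑ n ∈ Finset.Icc ⌈x⌉ (⌈z⌉ - 1), a n * e ((n : ℝ) * ξ)‖ := by
  have hST : Icc ⌈x⌉ (⌈y⌉ - 1) ⊆ Icc ⌈x⌉ (⌈z⌉ - 1) :=
    Icc_subset_Icc_right (by linarith [Int.ceil_mono hyz])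
  have hkernel : ∀ᵐ ξ, ‖(∑ n ∈ Icc ⌈x⌉ (⌈z⌉ - 1), a n * e (n * ξ)) *
      conj (∑ m ∈ Icc ⌈x⌉ (⌈y⌉ - 1), e (m * ξ))‖ ≤
      min (y - x + 1) (distInt ξ)⁻¹ * ‖∑ n ∈ Icc ⌈x⌉ (⌈z⌉ - 1), a n * e (n * ξ)‖ := by
    filter_upwards [(Set.countable_range ((↑) : ℤ → ℝ)).ae_notMem volume] with ξ hξ
    rw [norm_mul, RCLike.norm_conj, mul_comm]
    gcongr
    exact norm_sum_Icc_ceil_e_le_min hxy (distInt_pos_of_notMem_range_intCast hξ)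
  rw [sum_eq_integral_mul_conj hST]
  refine (intervalIntegral.norm_integral_le_integral_norm zero_le_one).trans
    (intervalIntegral.integral_mono_ae zero_le_one ?_ ?_ hkernel)
  · exact Continuous.intervalIntegrable (by fun_prop) _ _
  · exact intervalIntegrable_min_inv_distInt_mul (by linarith) (by fun_prop) _ _
end

section
/- Let I = [a, b) be an interval of integers with 0 ≤ a < b, let f : ℕ → ℝ, let K > 0 and 0 < H ≤ |I| be integers. Then |∑_{n ∈ I} e(f(n))|² ≤ 2·((|I| + K(H−1))/H) · ∑_{0 ≤ h < H} |∑_{n ∈ I, n + Kh ∈ I} e(f(n + Kh) − f(n))|, where e(t) = exp(2πit). -/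
/-!
Extend the summand by zero to `ℤ`. Translating `[a, b)` by `-Kh` with `h < H` does not change
the sum `S`, so `H S` is the sum, over the window `[a - K(H-1), b)` of length `|I| + K(H-1)`,
of the blocks `∑_{h<H} F(n + Kh)`. Cauchy–Schwarz over the window and expanding the square
leave the correlations of the translates by `Kh` and `Kh'`; these only depend on `|h - h'|`,
which takes each value `d < H` at most `2H` times.
-/

open scoped Real

open Finset ComplexConjugate

lemma e_mul_conj_e (s t : ℝ) : e s * conj (e t) = e (s - t) := by
  rw [e, e, e, ← Complex.exp_conj, ← Complex.exp_add]
  congr 1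
  simp only [map_mul, Complex.conj_I, Complex.conj_ofReal, map_ofNat]
  push_cast
  ring

theorem Finset.sum_comp_le_sum_of_injOn {ι κ : Type*} {s : Finset ι} {t : Finset κ} {g : κ → ℝ}
    (i : ι → κ) (hi : Set.InjOn i s) (hst : Set.MapsTo i s t) (hg : ∀ j ∈ t, 0 ≤ g j) :
    ∑ x ∈ s, g (i x) ≤ ∑ j ∈ t, g j := by
  classical
  rw [← sum_image hi]
  exact sum_le_sum_of_subset_of_nonneg (image_subset_iff.2 hst) fun j hj _ ↦ hg j hj

theorem sum_range_sum_range_dist_le {g : ℕ → ℝ} (hg : ∀ d, 0 ≤ g d) (H : ℕ) :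
    ∑ h ∈ range H, ∑ h' ∈ range H, g (Nat.dist h h') ≤ 2 * H * ∑ d ∈ range H, g d := by
  have row : ∀ h ∈ range H, ∑ h' ∈ range H, g (Nat.dist h h') ≤ 2 * ∑ d ∈ range H, g d := by
    intro h hh
    rw [mem_range] at hh
    rw [← sum_filter_add_sum_filter_not (range H) (h ≤ ·), two_mul]
    gcongr
    · rw [sum_congr rfl fun h' hh' ↦ by rw [Nat.dist_eq_sub_of_le (mem_filter.1 hh').2]]
      refine sum_comp_le_sum_of_injOn (· - h) (fun x hx y hy hxy ↦ ?_) (fun x hx ↦ ?_)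
        fun d _ ↦ hg d
      · simp only [mem_coe, mem_filter, mem_range] at hx hy hxy
        omega
      · simp only [mem_coe, mem_filter, mem_range] at hx ⊢
        omega
    · rw [sum_congr rfl fun h' hh' ↦ by
        rw [Nat.dist_eq_sub_of_le_right (le_of_not_ge (mem_filter.1 hh').2)]]
      refine sum_comp_le_sum_of_injOn (h - ·) (fun x hx y hy hxy ↦ ?_) (fun x hx ↦ ?_)
        fun d _ ↦ hg d
      · simp only [mem_coe, mem_filter, mem_range] at hx hy hxy
        omega
      · simp only [mem_coe, mem_filter, mem_range] at hx ⊢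
        omega
  calc ∑ h ∈ range H, ∑ h' ∈ range H, g (Nat.dist h h')
      ≤ ∑ _h ∈ range H, 2 * ∑ d ∈ range H, g d := sum_le_sum row
    _ = 2 * H * ∑ d ∈ range H, g d := by rw [sum_const, card_range, nsmul_eq_mul]; ring

theorem norm_sum_sum_sq_le {ι κ : Type*} (s : Finset ι) (t : Finset κ) (G : ι → κ → ℂ) :
    ‖∑ n ∈ s, ∑ h ∈ t, G n h‖ ^ 2 ≤
      #s * ∑ h ∈ t, ∑ h' ∈ t, ‖∑ n ∈ s, G n h * conj (G n h')‖ := by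
  have expand : ∀ n, (‖∑ h ∈ t, G n h‖ ^ 2 : ℝ) =
      (∑ h ∈ t, ∑ h' ∈ t, G n h * conj (G n h')).re := by
    intro n
    rw [← sum_mul_sum, ← map_sum, Complex.mul_conj']
    norm_cast
  calc ‖∑ n ∈ s, ∑ h ∈ t, G n h‖ ^ 2 ≤ (∑ n ∈ s, ‖∑ h ∈ t, G n h‖) ^ 2 := by
        gcongr; exact norm_sum_le _ _
    _ ≤ #s * ∑ n ∈ s, ‖∑ h ∈ t, G n h‖ ^ 2 := sq_sum_le_card_mul_sum_sq
    _ = #s * (∑ h ∈ t, ∑ h' ∈ t, ∑ n ∈ s, G n h * conj (G n h')).re := by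
        simp only [expand, ← Complex.re_sum]
        rw [sum_comm]
        congr 2
        exact sum_congr rfl fun _ _ ↦ sum_comm
    _ ≤ #s * ∑ h ∈ t, ∑ h' ∈ t, ‖∑ n ∈ s, G n h * conj (G n h')‖ := by
        rw [Complex.re_sum]
        gcongr
        rw [Complex.re_sum]
        gcongr
        exact Complex.re_le_norm _

theorem Finset.sum_comp_add_right_eq_of_support_subset {α M : Type*} [AddGroup α]
    [AddCommMonoid M] {G : α → M} {s t : Finset α} (k : α) (hG : ∀ x, G x ≠ 0 → x ∈ t)
    (hts : ∀ x ∈ t, x - k ∈ s) :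
    ∑ x ∈ s, G (x + k) = ∑ x ∈ t, G x := by
  calc ∑ x ∈ s, G (x + k) = ∑ x ∈ s.map (addRightEmbedding k), G x :=
        (sum_map s (addRightEmbedding k) G).symm
    _ = ∑ x ∈ t, G x := ?_
  refine (sum_subset (fun x hx ↦ mem_map.2 ⟨x - k, hts x hx, sub_add_cancel x k⟩) ?_).symm
  exact fun x _ hx ↦ not_not.1 (mt (hG x) hx)

noncomputable def autocorr (s : Finset ℤ) (F : ℤ → ℂ) (k : ℤ) : ℂ :=
  ∑ n ∈ s, F (n + k) * conj (F n)

section Window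

variable {F : ℤ → ℂ} {a b : ℤ} (hF : ∀ n, F n ≠ 0 → n ∈ Ico a b) (K H : ℕ)
include hF

theorem natCast_mul_sum_Ico_eq_sum_window :
    (H : ℂ) * ∑ n ∈ Ico a b, F n =
      ∑ n ∈ Ico (a - K * ↑(H - 1)) b, ∑ h ∈ range H, F (n + K * h) := by
  rw [sum_comm]
  have shift : ∀ h ∈ range H,
      ∑ n ∈ Ico (a - K * ↑(H - 1)) b, F (n + K * h) = ∑ n ∈ Ico a b, F n := by
    intro h hh
    have : (K : ℤ) * h ≤ K * ↑(H - 1) := by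
      gcongr; have := mem_range.1 hh; omega
    refine sum_comp_add_right_eq_of_support_subset _ hF fun n hn ↦ ?_
    rw [mem_Ico] at hn ⊢
    have : 0 ≤ (K : ℤ) * h := by positivity
    omega
  rw [sum_congr rfl shift, sum_const, card_range, nsmul_eq_mul]

theorem sum_window_mul_conj_eq_autocorr {h h' : ℕ} (hh' : h' ≤ h) (hH : h' < H) :
    ∑ n ∈ Ico (a - K * ↑(H - 1)) b, F (n + K * h) * conj (F (n + K * h')) =
      autocorr (Ico a b) F (K * ↑(h - h')) := by
  have : (K : ℤ) * h' ≤ K * ↑(H - 1) := by gcongr; omega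
  rw [autocorr, ← sum_comp_add_right_eq_of_support_subset ((K : ℤ) * h') (s := Ico _ b)
    (fun n hn ↦ hF n fun h0 ↦ hn (by rw [h0, map_zero, mul_zero])) fun n hn ↦ ?_]
  · refine sum_congr rfl fun n _ ↦ ?_
    push_cast [hh']
    ring_nf
  · rw [mem_Ico] at hn ⊢
    have : 0 ≤ (K : ℤ) * h' := by positivity
    omega

theorem sq_mul_norm_sum_Ico_sq_le :
    (H : ℝ) ^ 2 * ‖∑ n ∈ Ico a b, F n‖ ^ 2 ≤
      #(Ico (a - K * ↑(H - 1)) b) * (2 * H * ∑ d ∈ range H, ‖autocorr (Ico a b) F (K * d)‖) := by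
  set J := Ico (a - K * ↑(H - 1)) b
  -- the `(h, h')` and `(h', h)` terms are complex conjugates
  have pair : ∀ h ∈ range H, ∀ h' ∈ range H,
      ‖∑ n ∈ J, F (n + K * h) * conj (F (n + K * h'))‖ =
        ‖autocorr (Ico a b) F (K * ↑(Nat.dist h h'))‖ := by
    intro h hh h' hh'
    rw [mem_range] at hh hh'
    rcases le_total h' h with hle | hle
    · rw [Nat.dist_eq_sub_of_le_right hle, sum_window_mul_conj_eq_autocorr hF K H hle hh']
    · rw [Nat.dist_eq_sub_of_le hle, ← sum_window_mul_conj_eq_autocorr hF K H hle hh,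
        ← Complex.norm_conj, map_sum]
      simp only [map_mul, Complex.conj_conj, mul_comm]
      rfl
  calc (H : ℝ) ^ 2 * ‖∑ n ∈ Ico a b, F n‖ ^ 2 = ‖∑ n ∈ J, ∑ h ∈ range H, F (n + K * h)‖ ^ 2 := by
        rw [← natCast_mul_sum_Ico_eq_sum_window hF, norm_mul, Complex.norm_natCast, mul_pow]
    _ ≤ #J * ∑ h ∈ range H, ∑ h' ∈ range H, ‖∑ n ∈ J, F (n + K * h) * conj (F (n + K * h'))‖ :=
        norm_sum_sum_sq_le _ _ _
    _ = #J * ∑ h ∈ range H, ∑ h' ∈ range H, ‖autocorr (Ico a b) F (K * ↑(Nat.dist h h'))‖ := by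
        rw [sum_congr rfl fun h hh ↦ sum_congr rfl (pair h hh)]
    _ ≤ #J * (2 * H * ∑ d ∈ range H, ‖autocorr (Ico a b) F (K * d)‖) :=
        mul_le_mul_of_nonneg_left (sum_range_sum_range_dist_le
          (g := fun d ↦ ‖autocorr (Ico a b) F (K * d)‖) (fun d ↦ norm_nonneg _) H)
          (Nat.cast_nonneg _)

end Window

theorem Finset.sum_Ico_intCast {M : Type*} [AddCommMonoid M] (g : ℤ → M) (a b : ℕ) :
    ∑ n ∈ Ico (a : ℤ) b, g n = ∑ n ∈ Ico a b, g n := by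
  refine sum_nbij' Int.toNat (↑) (fun n hn ↦ ?_) (fun n hn ↦ ?_) (fun n hn ↦ ?_)
    (fun n _ ↦ Int.toNat_natCast n) fun n hn ↦ ?_
  all_goals simp only [mem_Ico] at hn ⊢
  any_goals omega
  rw [Int.toNat_of_nonneg (by omega)]

section IndicatorIco

variable (u : ℕ → ℂ) (a b : ℕ)

theorem indicator_Ico_comp_toNat_natCast (m : ℕ) :
    (Set.Ico (a : ℤ) b).indicator (u ∘ Int.toNat) m = (Set.Ico a b).indicator u m := by
  simp only [Set.indicator_apply, Set.mem_Ico, Nat.cast_le, Nat.cast_lt, Function.comp_apply,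
    Int.toNat_natCast]

theorem sum_Ico_indicator_Ico_comp_toNat :
    ∑ n ∈ Ico (a : ℤ) b, (Set.Ico (a : ℤ) b).indicator (u ∘ Int.toNat) n = ∑ n ∈ Ico a b, u n := by
  rw [sum_Ico_intCast]
  refine sum_congr rfl fun n hn ↦ ?_
  rw [indicator_Ico_comp_toNat_natCast, Set.indicator_of_mem (by simpa using hn)]

theorem autocorr_indicator_Ico_comp_toNat (k : ℕ) :
    autocorr (Ico (a : ℤ) b) ((Set.Ico (a : ℤ) b).indicator (u ∘ Int.toNat)) k =
      ∑ n ∈ Ico a b with n + k ∈ Ico a b, u (n + k) * conj (u n) := by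
  rw [autocorr, sum_Ico_intCast, sum_filter]
  refine sum_congr rfl fun n hn ↦ ?_
  have hn' : n ∈ Set.Ico a b := by simpa using hn
  rw [← Nat.cast_add, indicator_Ico_comp_toNat_natCast, indicator_Ico_comp_toNat_natCast,
    Set.indicator_of_mem hn', Set.indicator_apply]
  simp only [Set.mem_Ico, mem_Ico]
  split_ifs <;> simp

end IndicatorIco

theorem cast_card_Ico_sub_mul (a b K H : ℕ) (hab : a ≤ b) (hH : 0 < H) :
    (#(Ico ((a : ℤ) - K * ↑(H - 1)) b) : ℝ) = (b - a : ℝ) + K * (H - 1 : ℝ) := by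
  have : (0 : ℤ) ≤ b - (a - K * ↑(H - 1)) := by
    have : (0 : ℤ) ≤ K * ↑(H - 1) := by positivity
    omega
  rw [Int.card_Ico, ← Int.cast_natCast, Int.toNat_of_nonneg this]
  push_cast [Nat.cast_sub hH]
  ring

theorem stmt8_general (a b K H : ℕ) (hab : a < b) (f : ℕ → ℝ)
    (hH0 : 0 < H) :
    ‖∑ n ∈ Finset.Ico a b, e (f n)‖ ^ 2 ≤
      2 * ((((b : ℝ) - a) + K * ((H : ℝ) - 1)) / H) *
        ∑ h ∈ Finset.range H,
          ‖∑ n ∈ (Finset.Ico a b).filter (fun n => n + K * h ∈ Finset.Ico a b),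
              e (f (n + K * h) - f n)‖ := by
  set u : ℕ → ℂ := fun n ↦ e (f n)
  have key := sq_mul_norm_sum_Ico_sq_le (F := (Set.Ico (a : ℤ) b).indicator (u ∘ Int.toNat))
    (fun n hn ↦ by simpa using Set.mem_of_indicator_ne_zero hn) K H
  simp only [sum_Ico_indicator_Ico_comp_toNat, cast_card_Ico_sub_mul a b K H hab.le hH0] at key
  have hcorr : ∀ d : ℕ, autocorr (Ico (a : ℤ) b) ((Set.Ico (a : ℤ) b).indicator (u ∘ Int.toNat))
      (K * d) = ∑ n ∈ Ico a b with n + K * d ∈ Ico a b, e (f (n + K * d) - f n) := by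
    intro d
    rw [← Nat.cast_mul, autocorr_indicator_Ico_comp_toNat]
    exact sum_congr rfl fun n _ ↦ e_mul_conj_e _ _
  simp only [hcorr] at key
  have hHpos : (0 : ℝ) < H := by exact_mod_cast hH0
  refine le_of_mul_le_mul_left (key.trans_eq ?_) (pow_pos hHpos 2)
  field_simp

theorem stmt8 (a b K H : ℕ) (hab : a < b) (f : ℕ → ℝ) (hK : 0 < K)
    (hH0 : 0 < H) (hH : H ≤ b - a) :
    ‖∑ n ∈ Finset.Ico a b, e (f n)‖ ^ 2 ≤
      2 * ((((b : ℝ) - a) + K * ((H : ℝ) - 1)) / H) *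
        ∑ h ∈ Finset.range H,
          ‖∑ n ∈ (Finset.Ico a b).filter (fun n => n + K * h ∈ Finset.Ico a b),
              e (f (n + K * h) - f n)‖ :=
  stmt8_general a b K H hab f hH0
end

section
/- Let q ≥ 2, let r > 0, λ ≥ 1, N ≥ 1 be integers, let α > 0 and β ≥ 0 be reals, and let I ⊂ [0,∞) be an interval containing exactly N consecutive integers. Then the number of n ∈ I such that s_q(⌊α(n+r)+β⌋) − s_q(⌊αn+β⌋) ≠ s_q^λ(⌊α(n+r)+β⌋) − s_q^λ(⌊αn+β⌋) is strictly less than r·(Nα/q^λ + 2). -/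
/-- Base-q digit sum. -/
def sqd (q n : ℕ) : ℕ := (Nat.digits q n).sum

/-- Truncated base-q digit sum: digit sum of `n mod q^α`. -/
def sqT (q α n : ℕ) : ℕ := sqd q (n % q ^ α)

/-!
Write `a = (a mod q^λ) + q^λ ⌊a / q^λ⌋`; then `s_q(a) = s_q^λ(a) + s_q(⌊a / q^λ⌋)`, so the two
differences in the statement can only disagree at those `n` where the high part
`g(n) = ⌊⌊αn + β⌋ / q^λ⌋` changes between `n` and `n + r`. The function `g` is monotone, so
such an `n` has a unit step `g(n + j) < g(n + j + 1)` with `j < r`; for each fixed `j` the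
number of these steps in a window of `N` consecutive integers is at most the total increase
of `g` over the window, which is less than `Nα / q^λ + 2`.
-/

open Finset

lemma sqd_ofDigits {q : ℕ} (hq : 1 < q) {L : List ℕ} (hL : ∀ x ∈ L, x < q) :
    sqd q (Nat.ofDigits q L) = L.sum :=
  Nat.sum_digits_ofDigits_eq_sum hq (l := L.length) ⟨rfl, hL⟩

lemma sqd_eq_sqT_add_sqd_div {q : ℕ} (hq : 2 ≤ q) (lam a : ℕ) :
    sqd q a = sqT q lam a + sqd q (a / q ^ lam) := by
  have hD : ∀ x ∈ q.digits a, x < q := fun x hx => Nat.digits_lt_base hq hx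
  rw [sqT, Nat.self_mod_pow_eq_ofDigits_take _ _ hq, Nat.self_div_pow_eq_ofDigits_drop _ _ hq,
    sqd_ofDigits hq fun x hx => hD x (List.mem_of_mem_take hx),
    sqd_ofDigits hq fun x hx => hD x (List.mem_of_mem_drop hx), ← List.sum_append,
    List.take_append_drop]
  rfl

lemma sqd_sub_sqd_eq_sqT_sub_sqT {q : ℕ} (hq : 2 ≤ q) (lam : ℕ) {a b : ℕ}
    (h : a / q ^ lam = b / q ^ lam) :
    (sqd q a : ℤ) - sqd q b = (sqT q lam a : ℤ) - sqT q lam b := by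
  rw [sqd_eq_sqT_add_sqd_div hq lam a, sqd_eq_sqT_add_sqd_div hq lam b, h]
  push_cast
  ring

section StepCount

variable {g : ℕ → ℕ}

lemma card_filter_lt_succ_le (hg : Monotone g) (a N : ℕ) :
    #{n ∈ Ico a (a + N) | g n < g (n + 1)} ≤ g (a + N) - g a := by
  induction N with
  | zero => simp
  | succ N ih =>
    have hstep : g (a + N) ≤ g (a + N + 1) := hg (Nat.le_succ _)
    have hwindow : g a ≤ g (a + N) := hg (Nat.le_add_right a N)
    rw [← add_assoc, Nat.Ico_succ_right_eq_insert_Ico (Nat.le_add_right a N), filter_insert]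
    split_ifs with hjump
    · have := card_insert_le (a + N) {n ∈ Ico a (a + N) | g n < g (n + 1)}
      omega
    · omega

lemma exists_lt_succ_of_lt_add {n r : ℕ} (h : g n < g (n + r)) :
    ∃ j < r, g (n + j) < g (n + j + 1) := by
  induction r with
  | zero => exact absurd h (lt_irrefl _)
  | succ r ih =>
    by_cases hjump : g (n + r) < g (n + r + 1)
    · exact ⟨r, r.lt_succ_self, hjump⟩
    · obtain ⟨j, hj, hstep⟩ := ih (by rw [← add_assoc] at h; omega)
      exact ⟨j, hj.trans r.lt_succ_self, hstep⟩

lemma card_filter_ne_add_le (hg : Monotone g) (a N r : ℕ) :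
    #{n ∈ Ico a (a + N) | g n ≠ g (n + r)} ≤ ∑ j ∈ range r, (g (a + N + j) - g (a + j)) := by
  have hcover : {n ∈ Ico a (a + N) | g n ≠ g (n + r)} ⊆
      (range r).biUnion fun j => {n ∈ Ico a (a + N) | g (n + j) < g (n + 1 + j)} := by
    intro n hn
    rw [mem_filter] at hn
    obtain ⟨j, hj, hstep⟩ :=
      exists_lt_succ_of_lt_add (lt_of_le_of_ne (hg (Nat.le_add_right n r)) hn.2)
    rw [mem_biUnion]
    exact ⟨j, mem_range.2 hj, mem_filter.2 ⟨hn.1, by rwa [add_right_comm]⟩⟩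
  calc _ ≤ _ := card_le_card hcover
    _ ≤ _ := card_biUnion_le
    _ ≤ _ := sum_le_sum fun j _ =>
      card_filter_lt_succ_le (g := fun n => g (n + j))
        (hg.comp fun _ _ h => Nat.add_le_add_right h j) a N

end StepCount

section FloorSequence

variable {α β : ℝ}

lemma monotone_toNat_floor_mul_add (hα : 0 ≤ α) :
    Monotone fun n : ℕ => ⌊α * n + β⌋.toNat := fun _ _ h =>
  Int.toNat_le_toNat <| Int.floor_mono <| by gcongr

lemma toNat_floor_mul_add_sub_lt (hα : 0 ≤ α) (hβ : 0 ≤ β) (m N : ℕ) :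
    ((⌊α * ↑(m + N) + β⌋.toNat : ℕ) : ℝ) - ⌊α * m + β⌋.toNat < α * N + 1 := by
  have hcast : ∀ n : ℕ, ((⌊α * n + β⌋.toNat : ℕ) : ℝ) = ⌊α * n + β⌋ := fun n => by
    exact_mod_cast Int.toNat_of_nonneg (Int.floor_nonneg.2 (by positivity))
  rw [hcast, hcast]
  have hupper := Int.floor_le (α * ↑(m + N) + β)
  have hlower := Int.sub_one_lt_floor (α * m + β)
  push_cast at hupper ⊢
  linarith

end FloorSequence

lemma natCast_div_sub_natCast_div_lt (a b d : ℕ) :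
    ((b / d : ℕ) : ℝ) - (a / d : ℕ) < ((b : ℝ) - a) / d + 1 := by
  have hb : ((b / d : ℕ) : ℝ) ≤ b / d := Nat.cast_div_le
  have ha : (a : ℝ) / d < (a / d : ℕ) + 1 := by
    rw [← Nat.floor_div_eq_div (K := ℝ)]
    exact Nat.lt_floor_add_one _
  rw [sub_div]
  linarith

theorem stmt9_general (q r lam N n₀ : ℕ) (hq : 2 ≤ q) (hr : 0 < r)
    (α β : ℝ) (hα : 0 < α) (hβ : 0 ≤ β) :
    (((Finset.Ico n₀ (n₀ + N)).filter (fun n : ℕ =>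
        (sqd q (⌊α * ((n : ℝ) + r) + β⌋).toNat : ℤ) - (sqd q (⌊α * (n : ℝ) + β⌋).toNat : ℤ) ≠
          (sqT q lam (⌊α * ((n : ℝ) + r) + β⌋).toNat : ℤ) -
            (sqT q lam (⌊α * (n : ℝ) + β⌋).toNat : ℤ))).card : ℝ)
      < r * ((N : ℝ) * α / q ^ lam + 2) := by
  set f : ℕ → ℕ := fun n => ⌊α * n + β⌋.toNat
  set g : ℕ → ℕ := fun n => f n / q ^ lam
  have hg : Monotone g := fun _ _ h => Nat.div_le_div_right (monotone_toNat_floor_mul_add hα.le h)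
  have hd : (1 : ℝ) ≤ q ^ lam := one_le_pow₀ (by exact_mod_cast hq.trans' one_le_two)
  have hgrowth (j : ℕ) : (g (n₀ + N + j) : ℝ) - g (n₀ + j) < N * α / q ^ lam + 2 := by
    have hf := toNat_floor_mul_add_sub_lt hα.le hβ (n₀ + j) N
    rw [add_right_comm] at hf
    calc (g (n₀ + N + j) : ℝ) - g (n₀ + j) < ((f (n₀ + N + j) : ℝ) - f (n₀ + j)) / q ^ lam + 1 := by
          exact_mod_cast natCast_div_sub_natCast_div_lt (f (n₀ + j)) (f (n₀ + N + j)) (q ^ lam)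
      _ ≤ (α * N + 1) / q ^ lam + 1 := by gcongr
      _ ≤ N * α / q ^ lam + 2 := by
          rw [add_div, mul_comm α]
          linarith [div_le_one_of_le₀ hd (by positivity : (0 : ℝ) ≤ q ^ lam)]
  calc _ ≤ (#{n ∈ Ico n₀ (n₀ + N) | g n ≠ g (n + r)} : ℝ) :=
        Nat.cast_le.2 <| card_le_card <| monotone_filter_right _ fun n _ hne hg_eq => hne <| by
          simpa [f] using sqd_sub_sqd_eq_sqT_sub_sqT hq lam hg_eq.symm
    _ ≤ ((∑ j ∈ range r, (g (n₀ + N + j) - g (n₀ + j)) : ℕ) : ℝ) :=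
        Nat.cast_le.2 (card_filter_ne_add_le hg n₀ N r)
    _ < ∑ j ∈ range r, ((N : ℝ) * α / q ^ lam + 2) := by
        push_cast [Nat.cast_sub (hg (Nat.add_le_add_right (Nat.le_add_right n₀ N) _))]
        exact sum_lt_sum_of_nonempty (nonempty_range_iff.2 hr.ne') fun j _ => hgrowth j
    _ = r * ((N : ℝ) * α / q ^ lam + 2) := by rw [sum_const, card_range, nsmul_eq_mul]

theorem stmt9 (q r lam N n₀ : ℕ) (hq : 2 ≤ q) (hr : 0 < r) (hlam : 1 ≤ lam)
    (hN : 1 ≤ N) (α β : ℝ) (hα : 0 < α) (hβ : 0 ≤ β) :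
    (((Finset.Ico n₀ (n₀ + N)).filter (fun n : ℕ =>
        (sqd q (⌊α * ((n : ℝ) + r) + β⌋).toNat : ℤ) - (sqd q (⌊α * (n : ℝ) + β⌋).toNat : ℤ) ≠
          (sqT q lam (⌊α * ((n : ℝ) + r) + β⌋).toNat : ℤ) -
            (sqT q lam (⌊α * (n : ℝ) + β⌋).toNat : ℤ))).card : ℝ)
      < r * ((N : ℝ) * α / q ^ lam + 2) :=
  stmt9_general q r lam N n₀ hq hr α β hα hβ
end

section
/- Let q ≥ 2, k ≥ 2 be integers. Define, for r ∈ ℤ^{2^k} indexed by w ∈ {0,…,2^k−1} and e ∈ {0,…,q−1}^{k+1}, the map δ(r;e)_w := ⌊(r_w + (1,w)·e)/q⌋, where (1,w)·e = e₀ + ∑_{i=1}^{k} w_{i−1} e_i with (w₀,…,w_{k−1}) the binary digits of w. Let 𝔯 be the set of vectors reachable from the zero vector 0 by finitely many applications of maps r ↦ δ(r;e) with varying e ∈ {0,…,q−1}^{k+1}. Then every r = (r_w) ∈ 𝔯 satisfies 0 ≤ r_w ≤ s₂(w) for all w, and |𝔯| ≤ ∏_{i=0}^{k} (i+1)^{C(k,i)}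 where C(k,i) is the binomial coefficient. -/
/-- `(1,w)·e = e₀ + ∑_{i=1}^{k} w_{i−1} e_i`, where `w_i` are the binary digits of `w`. -/
def dotOne (k w : ℕ) (ee : ℕ → ℕ) : ℕ :=
  ee 0 + ∑ i ∈ Finset.range k, if w.testBit i then ee (i + 1) else 0

/-- `δ(r;e)_w = ⌊(r_w + (1,w)·e)/q⌋`. -/
def deltaMap (q k : ℕ) (r : Fin (2 ^ k) → ℤ) (ee : ℕ → ℕ) : Fin (2 ^ k) → ℤ :=
  fun w => Int.fdiv (r w + (dotOne k w.val ee : ℤ)) q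

/-- One step of the reachability relation: applying `r ↦ δ(r;e)` for some
`e ∈ {0,…,q−1}^{k+1}`. -/
def Step (q k : ℕ) (r r' : Fin (2 ^ k) → ℤ) : Prop :=
  ∃ ee : ℕ → ℕ, (∀ i ≤ k, ee i < q) ∧ r' = deltaMap q k r ee

/-- The set of vectors reachable from the zero vector. -/
def Reach (q k : ℕ) : Set (Fin (2 ^ k) → ℤ) :=
  {r | Relation.ReflTransGen (Step q k) 0 r}

/-!
Each coordinate is controlled separately: if `0 ≤ r_w ≤ s₂(w)`, then `(1,w)·e ≤ (q-1)(s₂(w)+1)`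
because `(1,w)·e` has `1 + s₂(w)` nonzero terms, so `r_w + (1,w)·e < q(s₂(w)+1)` and
`δ(r;e)_w ∈ [0, s₂(w)]` again. Hence every reachable vector lies in the box `∏_w [0, s₂(w)]`,
of size `∏_w (s₂(w)+1) = ∏_i (i+1)^C(k,i)`, since the `w < 2^k` with `s₂(w) = i` correspond
to the `i`-element subsets of `{0,…,k-1}`.
-/

open Finset

lemma Nat.digits_two_sum (n : ℕ) : (Nat.digits 2 n).sum = n % 2 + (Nat.digits 2 (n / 2)).sum := by
  rcases n.eq_zero_or_pos with rfl | hn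
  · simp
  · rw [Nat.digits_def' one_lt_two hn, List.sum_cons]

lemma Nat.digits_two_sum_two_mul (n : ℕ) : (Nat.digits 2 (2 * n)).sum = (Nat.digits 2 n).sum := by
  rw [Nat.digits_two_sum]
  simp

lemma Nat.digits_two_sum_two_mul_add_one (n : ℕ) :
    (Nat.digits 2 (2 * n + 1)).sum = (Nat.digits 2 n).sum + 1 := by
  rw [Nat.digits_two_sum, add_comm]
  congr 3 <;> omega

lemma sum_range_testBit_eq_digits_sum {k w : ℕ} (hw : w < 2 ^ k) :
    ∑ i ∈ range k, (if w.testBit i then 1 else 0) = (Nat.digits 2 w).sum := by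
  induction k generalizing w with
  | zero => simp_all
  | succ k ih =>
    rw [sum_range_succ', Nat.digits_two_sum w, ← ih (by omega)]
    simp only [Nat.testBit_succ, Nat.testBit_zero]
    rcases w.mod_two_eq_zero_or_one with h | h <;> simp [h, add_comm]

section Counting

variable {M : Type*} [CommMonoid M]

lemma prod_range_two_mul (g : ℕ → M) (n : ℕ) :
    ∏ w ∈ range (2 * n), g w = ∏ u ∈ range n, g (2 * u) * g (2 * u + 1) := by
  induction n with
  | zero => simp
  | succ n ih => rw [Nat.mul_succ, prod_range_succ, prod_range_succ, ih, prod_range_succ, mul_assoc]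

lemma prod_range_two_pow_digits_sum (f : ℕ → M) (k : ℕ) :
    ∏ w ∈ range (2 ^ k), f (Nat.digits 2 w).sum = ∏ t ∈ (range k).powerset, f #t := by
  induction k generalizing f with
  | zero => simp
  | succ k ih =>
    rw [pow_succ', prod_range_two_mul, range_add_one, prod_powerset_insert notMem_range_self,
      ← prod_mul_distrib]
    simp only [Nat.digits_two_sum_two_mul, Nat.digits_two_sum_two_mul_add_one]
    rw [ih fun i => f i * f (i + 1)]
    refine prod_congr rfl fun t ht => ?_
    rw [card_insert_of_notMem fun hk => notMem_range_self (mem_powerset.mp ht hk)]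

lemma prod_range_two_pow_digits_sum_eq_prod_pow_choose (f : ℕ → M) (k : ℕ) :
    ∏ w ∈ range (2 ^ k), f (Nat.digits 2 w).sum = ∏ i ∈ range (k + 1), f i ^ k.choose i := by
  rw [prod_range_two_pow_digits_sum, prod_powerset, card_range]
  exact prod_congr rfl fun i _ => by rw [prod_powersetCard, card_range]

end Counting

lemma dotOne_le {k w c : ℕ} (hw : w < 2 ^ k) {ee : ℕ → ℕ} (hee : ∀ i ≤ k, ee i ≤ c) :
    dotOne k w ee ≤ c * ((Nat.digits 2 w).sum + 1) := by
  have hbits : (∑ i ∈ range k, if w.testBit i then ee (i + 1) else 0) ≤ c * (Nat.digits 2 w).sum :=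
    calc (∑ i ∈ range k, if w.testBit i then ee (i + 1) else 0)
        ≤ ∑ i ∈ range k, if w.testBit i then c else 0 := by
          gcongr with i hi
          split_ifs
          exacts [hee _ (by simp at hi; omega), le_rfl]
      _ = c * (Nat.digits 2 w).sum := by
          simp only [← sum_range_testBit_eq_digits_sum hw, mul_sum, mul_ite, mul_one, mul_zero]
  rw [dotOne, mul_add_one, add_comm]
  exact add_le_add hbits (hee 0 k.zero_le)

noncomputable def digitSumBox (k : ℕ) : Finset (Fin (2 ^ k) → ℤ) :=
  Fintype.piFinset fun w => Icc 0 ((Nat.digits 2 w.val).sum : ℤ)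

lemma mem_digitSumBox {k : ℕ} {r : Fin (2 ^ k) → ℤ} :
    r ∈ digitSumBox k ↔ ∀ w, 0 ≤ r w ∧ r w ≤ ((Nat.digits 2 w.val).sum : ℤ) := by
  simp only [digitSumBox, Fintype.mem_piFinset, mem_Icc]

lemma card_digitSumBox (k : ℕ) :
    #(digitSumBox k) = ∏ i ∈ range (k + 1), (i + 1) ^ k.choose i := by
  simp only [digitSumBox, Fintype.card_piFinset, Int.card_Icc, sub_zero, ← Nat.cast_add_one,
    Int.toNat_natCast]
  rw [Fin.prod_univ_eq_prod_range (fun w => (Nat.digits 2 w).sum + 1)]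
  exact prod_range_two_pow_digits_sum_eq_prod_pow_choose (· + 1) k

lemma Step.mem_digitSumBox {q k : ℕ} {r r' : Fin (2 ^ k) → ℤ} (hr : r ∈ digitSumBox k)
    (h : Step q k r r') : r' ∈ digitSumBox k := by
  obtain ⟨ee, hee, rfl⟩ := h
  have hq : 0 < q := Nat.zero_lt_of_lt (hee 0 k.zero_le)
  rw [_root_.mem_digitSumBox] at hr ⊢
  intro w
  have hdot : (dotOne k w ee : ℤ) ≤ (q - 1) * ((Nat.digits 2 w.val).sum + 1) := by
    have := dotOne_le w.isLt fun i hi => Nat.le_sub_one_of_lt (hee i hi)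
    zify [hq] at this
    push_cast
    exact this
  have hN : 0 ≤ r w + dotOne k w ee := add_nonneg (hr w).1 (Nat.cast_nonneg _)
  rw [deltaMap, Int.fdiv_eq_ediv_of_nonneg _ (Nat.cast_nonneg q)]
  refine ⟨Int.ediv_nonneg hN (Nat.cast_nonneg q),
    (Int.ediv_le_iff_le_mul (by exact_mod_cast hq)).mpr ?_⟩
  linarith [(hr w).2]

lemma reach_subset_digitSumBox (q k : ℕ) : Reach q k ⊆ digitSumBox k := fun _ hr => by
  induction hr with
  | refl => exact mem_digitSumBox.mpr fun w => ⟨le_rfl, Nat.cast_nonneg _⟩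
  | tail _ hstep ih => exact hstep.mem_digitSumBox ih

theorem stmt12_general (q k : ℕ) :
    (∀ r ∈ Reach q k, ∀ w : Fin (2 ^ k),
        0 ≤ r w ∧ r w ≤ ((Nat.digits 2 w.val).sum : ℤ)) ∧
      (Reach q k).Finite ∧
        (Reach q k).ncard ≤ ∏ i ∈ Finset.range (k + 1), (i + 1) ^ k.choose i := by
  have hsub := reach_subset_digitSumBox q k
  refine ⟨fun r hr => mem_digitSumBox.mp (hsub hr), (digitSumBox k).finite_toSet.subset hsub, ?_⟩
  rw [← card_digitSumBox, ← Set.ncard_coe_finset]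
  exact Set.ncard_le_ncard hsub (digitSumBox k).finite_toSet

theorem stmt12 (q k : ℕ) (hq : 2 ≤ q) (hk : 2 ≤ k) :
    (∀ r ∈ Reach q k, ∀ w : Fin (2 ^ k),
        0 ≤ r w ∧ r w ≤ ((Nat.digits 2 w.val).sum : ℤ)) ∧
      (Reach q k).Finite ∧
        (Reach q k).ncard ≤ ∏ i ∈ Finset.range (k + 1), (i + 1) ^ k.choose i :=
  stmt12_general q k
end
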